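/- arXiv:2310.19149 — 2 statements merged into one kernel-verified Lean document; each statement's English description precedes it below -/
import Mathlib

section
/- Let G = (V, E) be a d-regular λ-spectral expander on n vertices, let S ⊆ E be a nonempty set of edges, and let U be the set of vertices incident to some edge of S. If at least a γ-fraction of the vertices of U are each incident to at least δd edges of S, then |S| ≥ γδ(γδ − λ/d)|E|. -/
/-!
Write `s = |S|` and `u = |U|`. Summing `S`-degrees over the heavy vertices alone gives
`γδd·u ≤ 2s`, while the `2s` ordered pairs of endpoints of edges of `S` are adjacent pairs
inside `U`, so the mixing lemma gives `2s ≤ (d/n)u² + λu`. Together these force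
`u ≥ n(γδ - λ/d)`, hence `2s ≥ γδd·u ≥ γδ(γδ - λ/d)·dn = 2γδ(γδ - λ/d)|E|`.
-/

open Finset

namespace SimpleGraph

variable {V : Type*} [Fintype V]

lemma ncard_edgeSet_eq_card_edgeFinset (G : SimpleGraph V) [DecidableRel G.Adj] :
    G.edgeSet.ncard = #G.edgeFinset := by
  rw [← coe_edgeFinset, Set.ncard_coe_finset]

lemma IsRegularOfDegree.two_mul_ncard_edgeSet {G : SimpleGraph V} [DecidableRel G.Adj] {d : ℕ}
    (h : G.IsRegularOfDegree d) : 2 * G.edgeSet.ncard = Fintype.card V * d := by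
  rw [ncard_edgeSet_eq_card_edgeFinset, ← sum_degrees_eq_twice_card_edges]
  simp [h.degree_eq]

lemma ncard_incidenceSet_eq_degree (G : SimpleGraph V) [DecidableRel G.Adj] (v : V) :
    (G.incidenceSet v).ncard = G.degree v := by
  classical
  rw [Set.ncard_eq_toFinset_card', Set.toFinset_card, card_incidenceSet_eq_degree]

lemma ncard_adj_pairs (G : SimpleGraph V) :
    {p : V × V | G.Adj p.1 p.2}.ncard = 2 * G.edgeSet.ncard := by
  classical
  have hrange : {p : V × V | G.Adj p.1 p.2} = Set.range (Dart.toProd : G.Dart → V × V) := by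
    ext p
    exact ⟨fun h => ⟨⟨p, h⟩, rfl⟩, by rintro ⟨d, rfl⟩; exact d.adj⟩
  rw [hrange, Set.ncard_range_of_injective Dart.toProd_injective, Nat.card_eq_fintype_card,
    dart_card_eq_twice_card_edges, ncard_edgeSet_eq_card_edgeFinset]

lemma mul_ncard_le_two_mul_ncard_edgeSet (G : SimpleGraph V) [DecidableRel G.Adj] {t : ℝ}
    {W : Set V} (hW : ∀ v ∈ W, t ≤ G.degree v) : t * W.ncard ≤ 2 * G.edgeSet.ncard := by
  classical
  calc t * W.ncard = ∑ _v ∈ W.toFinset, t := by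
        rw [sum_const, nsmul_eq_mul, Set.ncard_eq_toFinset_card', mul_comm]
    _ ≤ ∑ v ∈ W.toFinset, (G.degree v : ℝ) := sum_le_sum fun v hv => hW v (by simpa using hv)
    _ ≤ ∑ v, (G.degree v : ℝ) :=
        sum_le_sum_of_subset_of_nonneg (subset_univ _) fun _ _ _ => by positivity
    _ = 2 * G.edgeSet.ncard := by
        rw [ncard_edgeSet_eq_card_edgeFinset]
        exact_mod_cast sum_degrees_eq_twice_card_edges G

lemma two_mul_ncard_edgeSet_le_ncard_adj_pairs {G H : SimpleGraph V} (hHG : H ≤ G) {U : Set V}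
    (hU : H.support ⊆ U) :
    2 * H.edgeSet.ncard ≤ {p : V × V | p.1 ∈ U ∧ p.2 ∈ U ∧ G.Adj p.1 p.2}.ncard := by
  rw [← ncard_adj_pairs]
  exact Set.ncard_le_ncard (fun p hp => ⟨hU ⟨_, hp⟩, hU ⟨_, hp.symm⟩, hHG hp⟩) (Set.toFinite _)

end SimpleGraph

lemma mul_sub_div_mul_le_of_mixing {c d n u s lam : ℝ} (hc : 0 ≤ c) (hd : 0 < d) (hn : 0 < n)
    (hu : 0 < u) (hlow : c * d * u ≤ 2 * s) (hup : 2 * s ≤ d / n * u ^ 2 + lam * u) :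
    c * (c - lam / d) * (d * n / 2) ≤ s := by
  have hlarge : n * (c * d - lam) ≤ d * u := by
    have hdiv : c * d ≤ d / n * u + lam := le_of_mul_le_mul_right (by nlinarith) hu
    rw [div_mul_eq_mul_div, ← sub_le_iff_le_add, le_div_iff₀ hn] at hdiv
    linarith
  calc c * (c - lam / d) * (d * n / 2) = c * (n * (c * d - lam)) / 2 := by
        field_simp
    _ ≤ c * (d * u) / 2 := by gcongr
    _ ≤ s := by linarith

open SimpleGraph in
theorem stmt4_general {V : Type*} [Fintype V] (G : SimpleGraph V) [DecidableRel G.Adj]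
    (d : ℕ) (hreg : G.IsRegularOfDegree d) (lam γ δ : ℝ)
    (hγ0 : 0 < γ) (hδ0 : 0 < δ)
    (hEML : ∀ U : Set V,
      (({p : V × V | p.1 ∈ U ∧ p.2 ∈ U ∧ G.Adj p.1 p.2}).ncard : ℝ)
        ≤ (d / Fintype.card V) * U.ncard ^ 2 + lam * U.ncard)
    (S : Set (Sym2 V)) (hSE : S ⊆ G.edgeSet) (hS : S.Nonempty)
    (U : Set V) (hU : U = {v : V | ∃ e ∈ S, v ∈ e})
    (hfrac : γ * U.ncard ≤
      (({v ∈ U | δ * d ≤ (({e ∈ S | v ∈ e}).ncard : ℝ)}).ncard : ℝ)) :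
    γ * δ * (γ * δ - lam / d) * G.edgeSet.ncard ≤ (S.ncard : ℝ) := by
  classical
  obtain ⟨H, rfl⟩ : ∃ H : SimpleGraph V, H.edgeSet = S := ⟨fromEdgeSet S, (edgeSet_eq_iff _ _).mpr
    ⟨rfl, Set.subset_compl_iff_disjoint_right.mp (hSE.trans G.edgeSet_subset_compl_diagSet)⟩⟩
  have hHG : H ≤ G := edgeSet_subset_edgeSet.mp hSE
  have hsupp : H.support ⊆ U := fun v ⟨w, hvw⟩ => hU ▸ ⟨s(v, w), hvw, Sym2.mem_mk_left v w⟩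
  obtain ⟨a, b, hab⟩ := ne_bot_iff_exists_adj.mp (edgeSet_nonempty.mp hS)
  have hd : 0 < d := hreg.degree_eq a ▸ (G.degree_pos_iff_exists_adj a).mpr ⟨b, hHG hab⟩
  have hu : 0 < U.ncard := (Set.ncard_pos (Set.toFinite U)).mpr ⟨a, hsupp ⟨b, hab⟩⟩
  have hn : 0 < Fintype.card V := Fintype.card_pos_iff.mpr ⟨a⟩
  have hlow : γ * δ * d * U.ncard ≤ 2 * H.edgeSet.ncard := calc
    γ * δ * d * U.ncard = δ * d * (γ * U.ncard) := by ring
    _ ≤ δ * d * ({v ∈ U | δ * d ≤ (({e ∈ H.edgeSet | v ∈ e}).ncard : ℝ)}).ncard := by gcongr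
    _ ≤ 2 * H.edgeSet.ncard :=
      H.mul_ncard_le_two_mul_ncard_edgeSet fun v hv => H.ncard_incidenceSet_eq_degree v ▸ hv.2
  have hup : (2 * H.edgeSet.ncard : ℝ) ≤ d / Fintype.card V * U.ncard ^ 2 + lam * U.ncard :=
    le_trans (by exact_mod_cast two_mul_ncard_edgeSet_le_ncard_adj_pairs hHG hsupp) (hEML U)
  have hE : (G.edgeSet.ncard : ℝ) = d * Fintype.card V / 2 := by
    have := congrArg (Nat.cast : ℕ → ℝ) hreg.two_mul_ncard_edgeSet
    push_cast at this
    linarith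
  rw [hE]
  exact mul_sub_div_mul_le_of_mixing (by positivity) (by positivity) (by positivity) (by positivity)
    hlow hup

/-- Fractional version: if `S` is a nonempty set of edges of a `d`-regular `lam`-spectral expander
(encoded via the expander mixing lemma bound), `U` the set of vertices touched by `S`, and at least
a `γ`-fraction of the vertices of `U` are incident to at least `δd` edges of `S`, then
`|S| ≥ γδ(γδ - lam/d)|E|`. -/
theorem stmt4 {V : Type*} [Fintype V] (G : SimpleGraph V) [DecidableRel G.Adj]
    (d : ℕ) (hreg : G.IsRegularOfDegree d) (lam γ δ : ℝ)
    (hγ0 : 0 < γ) (hγ1 : γ ≤ 1) (hδ0 : 0 < δ) (hδ1 : δ ≤ 1)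
    (hEML : ∀ U : Set V,
      (({p : V × V | p.1 ∈ U ∧ p.2 ∈ U ∧ G.Adj p.1 p.2}).ncard : ℝ)
        ≤ (d / Fintype.card V) * U.ncard ^ 2 + lam * U.ncard)
    (S : Set (Sym2 V)) (hSE : S ⊆ G.edgeSet) (hS : S.Nonempty)
    (U : Set V) (hU : U = {v : V | ∃ e ∈ S, v ∈ e})
    (hfrac : γ * U.ncard ≤
      (({v ∈ U | δ * d ≤ (({e ∈ S | v ∈ e}).ncard : ℝ)}).ncard : ℝ)) :
    γ * δ * (γ * δ - lam / d) * G.edgeSet.ncard ≤ (S.ncard : ℝ) :=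
  stmt4_general G d hreg lam γ δ hγ0 hδ0 hEML S hSE hS U hU hfrac
end

section
/- Let G be the edge-vertex incidence graph of a d-regular λ-spectral expander, and let G' = (L' ∪ R', E') be a d'-left-regular bipartite graph with L' = [d] that is a δ'-unique neighbor expander. Then the routed product G ∘ G' is a (δ'(δ' − λ/d))-unique neighbor expander: for every nonempty S ⊆ L with |S| < δ'(δ' − λ/d)|L|, some right vertex of G ∘ G' is adjacent to exactly one vertex of S. -/
/-- Routed product of the edge-vertex incidence graph of a `d`-regular `lam`-spectral expander `H`
(encoded by the structural lemma `hstruct`) with a `δ'`-unique-neighbor expander `G'` on left set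
`[d]` is a `(δ'(δ' - lam/d))`-unique-neighbor expander: every nonempty set `S` of edges of `H`
with `|S| < δ'(δ' - lam/d)|L|` has a right vertex of the routed product adjacent to exactly one
element of `S`. -/
theorem stmt10 {V R' : Type*} [Fintype V] [Fintype R']
    (H : SimpleGraph V) [DecidableRel H.Adj]
    (d : ℕ) (hreg : H.IsRegularOfDegree d) (lam δ' : ℝ)
    (hstruct : ∀ S : Set (Sym2 V), S ⊆ H.edgeSet →
      (∀ v : V, (∃ e ∈ S, v ∈ e) → δ' * d ≤ (({e ∈ S | v ∈ e}).ncard : ℝ)) →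
      δ' * (δ' - lam / d) * H.edgeSet.ncard ≤ (S.ncard : ℝ))
    (ord : V → Fin d → Sym2 V)
    (hord_mem : ∀ v i, ord v i ∈ H.edgeSet ∧ v ∈ ord v i)
    (hord_inj : ∀ v, Function.Injective (ord v))
    (hord_surj : ∀ v e, e ∈ H.edgeSet → v ∈ e → ∃ i, ord v i = e)
    (Adj' : Fin d → R' → Prop) (d' : ℕ)
    (hl' : ∀ i, ({v' : R' | Adj' i v'}).ncard = d')
    (hUN : ∀ I : Set (Fin d), I.Nonempty → (I.ncard : ℝ) < δ' * d →
      ∃ v' : R', ∃! i, i ∈ I ∧ Adj' i v') :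
    ∀ S : Set (Sym2 V), S ⊆ H.edgeSet → S.Nonempty →
      (S.ncard : ℝ) < δ' * (δ' - lam / d) * H.edgeSet.ncard →
      ∃ p : V × R', ∃! e, e ∈ S ∧ ∃ i, ord p.1 i = e ∧ Adj' i p.2 := by
  intro S hSsub hSne hScard
  have hex : ∃ v : V, (∃ e ∈ S, v ∈ e) ∧ (({e ∈ S | v ∈ e}).ncard : ℝ) < δ' * d := by
    by_contra h
    push_neg at h
    have := hstruct S hSsub h
    linarith
  obtain ⟨v, ⟨e0, he0S, hve0⟩, hsmall⟩ := hex
  set I : Set (Fin d) := {i | ord v i ∈ S} with hI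
  have hIne : I.Nonempty := by
    obtain ⟨i, hi⟩ := hord_surj v e0 (hSsub he0S) hve0
    exact ⟨i, by simp only [hI, Set.mem_setOf_eq, hi]; exact he0S⟩
  have hmap : ord v '' I ⊆ {e ∈ S | v ∈ e} := by
    rintro e ⟨i, hiI, rfl⟩
    exact ⟨hiI, (hord_mem v i).2⟩
  have hIcard : (I.ncard : ℝ) < δ' * d := by
    have h1 : I.ncard = (ord v '' I).ncard := (Set.ncard_image_of_injective I (hord_inj v)).symm
    have h2 : (ord v '' I).ncard ≤ ({e ∈ S | v ∈ e}).ncard :=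
      Set.ncard_le_ncard hmap (Set.toFinite _)
    calc (I.ncard : ℝ) = ((ord v '' I).ncard : ℝ) := by rw [h1]
      _ ≤ _ := Nat.cast_le.mpr h2
      _ < δ' * d := hsmall
  obtain ⟨v', i, ⟨hiI, hAdj⟩, huniq⟩ := hUN I hIne hIcard
  refine ⟨(v, v'), ord v i, ⟨hiI, i, rfl, hAdj⟩, ?_⟩
  rintro e ⟨heS, j, rfl, hAdjj⟩
  have hj : j = i := huniq j ⟨heS, hAdjj⟩
  rw [hj]
end
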